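/- arXiv:1807.01858 — 12 statements merged into one kernel-verified Lean document; each statement's English description precedes it below -/
import Mathlib

section
/- If u is an element of F_{q^3} (q = 2^s) satisfying u^2 + (β^{q^2-1} + β^{q-1} + 1)u + β^{q-1} = 0 for some nonzero β in F_{q^3}, then u^{q+1} + u + 1 = 0. -/
/-!
Let `φ x = x ^ q`, an automorphism of `𝔽_{q³}` with `φ³ = id`, and `a = β ^ (q - 1) = φ β / β`;
then `β ^ (q² - 1) = a · φ a` and `a · φ a · φ² a = 1`. In characteristic 2, combining the
quadratic for `u` with its image under `φ` (the quadratic for `φ u` with `a` replaced by `φ a`)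
gives `(u · φ u + u + 1) · ((u + 1) · φ u + φ a · u) = 0`. If the second factor vanishes, so do
its two conjugates, and eliminating between the three forces either `φ u = φ a · u`, impossible
as `u ≠ 0`, or `a · φ a + a + 1 = 0`; then `u² = a` and `(u + 1) · (u · φ u + u + 1) = 0`
with `u ≠ 1`.
-/

section CharTwo

variable {R : Type*} [CommRing R] [CharP R 2]

theorem mul_factors_eq_zero_of_quadratic_pair {a b c u v : R} (habc : a * b * c = 1)
    (hu : u ^ 2 + (a * b + a + 1) * u + a = 0) (hv : v ^ 2 + (b * c + b + 1) * v + b = 0) :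
    a * ((u * v + u + 1) * ((u + 1) * v + b * u)) = 0 := by
  linear_combination (a * (u ^ 2 + u)) * hv - v * hu - (u ^ 2 * v + u * v) * habc +
    (a * v * (u + 1)) * CharTwo.two_eq_zero (R := R)

theorem mul_add_mul_eq_zero_of_cyclic {a b c u v w : R} (habc : a * b * c = 1)
    (e₁ : (u + 1) * v + b * u = 0) (e₂ : (v + 1) * w + c * v = 0)
    (e₃ : (w + 1) * u + a * w = 0) :
    (b * c + b + 1) * (b * u + v) = 0 := by
  linear_combination b * (v + 1) * e₃ - b * (u + a) * e₂ - b * (1 - c) * e₁ + v * habc +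
    (v + b * v + b ^ 2 * u) * CharTwo.two_eq_zero (R := R)

variable [IsDomain R]

theorem mul_add_add_one_eq_zero_of_cyclic {a b c u v w : R} (habc : a * b * c = 1)
    (hu : u ^ 2 + (a * b + a + 1) * u + a = 0)
    (e₁ : (u + 1) * v + b * u = 0) (e₂ : (v + 1) * w + c * v = 0)
    (e₃ : (w + 1) * u + a * w = 0) :
    u * v + u + 1 = 0 := by
  have h2 : (2 : R) = 0 := CharTwo.two_eq_zero
  have ha : a ≠ 0 := left_ne_zero_of_mul (left_ne_zero_of_mul_eq_one habc)
  have hb : b ≠ 0 := right_ne_zero_of_mul (left_ne_zero_of_mul_eq_one habc)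
  have hu0 : u ≠ 0 := by
    rintro rfl
    exact ha (by linear_combination hu)
  rcases mul_eq_zero.mp (mul_add_mul_eq_zero_of_cyclic habc e₁ e₂ e₃) with hbc | hbv
  · have hab : a * b + a + 1 = 0 := by linear_combination a * hbc - habc
    have husq : u ^ 2 = a := by linear_combination -hu + u * hab + u ^ 2 * h2
    have hu1 : u + 1 ≠ 0 := by
      intro h0
      apply mul_ne_zero ha hb
      linear_combination -hu + (u + a + a * b) * h0
    refine (mul_eq_zero.mp ?_).resolve_right hu1
    linear_combination u * e₁ + (1 - b) * husq - hab + (u + a + 1) * h2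
  · have hv0 : v ≠ 0 := by
      rintro rfl
      exact mul_ne_zero hb hu0 (by linear_combination e₁)
    exact absurd (by linear_combination e₁ - hbv) (mul_ne_zero hu0 hv0)

end CharTwo

section OrderThreeEndomorphism

variable {K : Type*} [Field K] (φ : K →+* K)

theorem div_mul_map_div_mul_map_map_div_eq_one (hφ : ∀ x, φ (φ (φ x)) = x) {β : K}
    (hβ : β ≠ 0) :
    φ β / β * φ (φ β / β) * φ (φ (φ β / β)) = 1 := by
  have h₁ : φ β ≠ 0 := map_ne_zero φ |>.mpr hβ
  have h₂ : φ (φ β) ≠ 0 := map_ne_zero φ |>.mpr h₁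
  simp only [map_div₀, hφ]
  field_simp

theorem mul_map_add_add_one_eq_zero [CharP K 2] (hφ : ∀ x, φ (φ (φ x)) = x) {a u : K}
    (ha : a * φ a * φ (φ a) = 1)
    (hu : u ^ 2 + (a * φ a + a + 1) * u + a = 0) :
    u * φ u + u + 1 = 0 := by
  have hv : (φ u) ^ 2 + (φ a * φ (φ a) + φ a + 1) * φ u + φ a = 0 := by
    simpa using congrArg φ hu
  have ha0 : a ≠ 0 := left_ne_zero_of_mul (left_ne_zero_of_mul_eq_one ha)
  obtain h | e₁ := mul_eq_zero.mp <|
    (mul_eq_zero.mp (mul_factors_eq_zero_of_quadratic_pair ha hu hv)).resolve_left ha0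
  · exact h
  have e₂ : (φ u + 1) * φ (φ u) + φ (φ a) * φ u = 0 := by simpa using congrArg φ e₁
  have e₃ : (φ (φ u) + 1) * u + a * φ (φ u) = 0 := by simpa [hφ] using congrArg φ e₂
  exact mul_add_add_one_eq_zero_of_cyclic ha hu e₁ e₂ e₃

end OrderThreeEndomorphism

theorem stmt_0_general (s : ℕ) (q : ℕ) (hq : q = 2 ^ s)
    (K : Type*) [Field K] [Fintype K] (hK : Fintype.card K = q ^ 3)
    (β : K) (hβ : β ≠ 0) (u : K)
    (h : u ^ 2 + (β ^ (q ^ 2 - 1) + β ^ (q - 1) + 1) * u + β ^ (q - 1) = 0) :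
    u ^ (q + 1) + u + 1 = 0 := by
  have hq₁ : 1 ≤ q := hq ▸ Nat.one_le_two_pow
  have : CharP K 2 := CharTwo.of_one_ne_zero_of_two_eq_zero one_ne_zero <|
    eq_zero_of_pow_eq_zero (n := s * 3) <| by
      simpa [hK, hq, ← pow_mul] using FiniteField.cast_card_eq_zero K
  let φ := iterateFrobenius K 2 s
  have hφ_apply (x : K) : φ x = x ^ q := by rw [hq]; rfl
  have hφ (x : K) : φ (φ (φ x)) = x := by
    rw [hφ_apply, hφ_apply, hφ_apply, ← pow_mul, ← pow_mul, ← mul_assoc, ← pow_three', ← hK,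
      FiniteField.pow_card]
  have hpow₁ : β ^ (q - 1) = φ β / β := by
    rw [pow_sub₀ _ hβ hq₁, hφ_apply, pow_one, div_eq_mul_inv]
  have hpow₂ : β ^ (q ^ 2 - 1) = φ β / β * φ (φ β / β) := by
    rw [pow_sub₀ _ hβ (Nat.one_le_pow _ _ hq₁), map_div₀, hφ_apply, hφ_apply, ← pow_mul, sq]
    field_simp
  rw [hpow₁, hpow₂] at h
  simpa [hφ_apply, pow_succ'] using
    mul_map_add_add_one_eq_zero φ hφ (div_mul_map_div_mul_map_map_div_eq_one φ hφ hβ) h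

theorem stmt_0 (s : ℕ) (hs : 0 < s) (q : ℕ) (hq : q = 2 ^ s)
    (K : Type*) [Field K] [Fintype K] (hK : Fintype.card K = q ^ 3)
    (β : K) (hβ : β ≠ 0) (u : K)
    (h : u ^ 2 + (β ^ (q ^ 2 - 1) + β ^ (q - 1) + 1) * u + β ^ (q - 1) = 0) :
    u ^ (q + 1) + u + 1 = 0 :=
  stmt_0_general s q hq K hK β hβ u h
end

section
/- Let q = 2^s, β a nonzero element of F_{q^3} with Tr_{q^3/q}(β) ≠ 0, and u ∈ F_{q^3}. Then u^2 + (β^{q^2-1} + β^{q-1} + 1)u + β^{q-1} = 0 holds if and only if u^{q+1} + u + 1 = 0 and βu + β^q + β ∈ F_q. -/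
/-!
Multiplying by `β` and writing `σ` for the Frobenius `x ↦ x ^ q`, which has order three on
`F_{q^3}`, the quadratic becomes `β u² + T u + σ β = 0` with `T = Tr(β) = β + σ β + σ² β`.
Applying `σ` to it shows that `z = σ β · σ u + β u + β + σ² β` satisfies `z² = T z` in
characteristic two, so `z = 0` or `z = T`. The case `z = T` says `σ (β u) + β u = σ β`, which
forces `Tr(σ β) = Tr(β) = 0`. The case `z = 0` is exactly the pair of conditions on the right,
and conversely these two conditions add up to the quadratic.
-/

section CyclicTrace

variable {R : Type*} [CommRing R] (σ : R →+* R)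

def cyclicTrace (x : R) : R := x + σ x + σ (σ x)

variable {σ}

theorem cyclicTrace_map (hσ : ∀ x, σ (σ (σ x)) = x) (x : R) :
    cyclicTrace σ (σ x) = cyclicTrace σ x := by
  simp only [cyclicTrace, hσ]
  ring

theorem apply_cyclicTrace (hσ : ∀ x, σ (σ (σ x)) = x) (x : R) :
    σ (cyclicTrace σ x) = cyclicTrace σ x := by
  simp only [cyclicTrace, map_add, hσ]
  ring

theorem cyclicTrace_apply_add_self [CharP R 2] (hσ : ∀ x, σ (σ (σ x)) = x) (v : R) :
    cyclicTrace σ (σ v + v) = 0 := by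
  simp only [cyclicTrace, map_add, hσ]
  linear_combination (v + σ v + σ (σ v)) * CharTwo.two_eq_zero (R := R)

end CyclicTrace

section Quadratic

variable {K : Type*} [Field K] [CharP K 2] {σ : K →+* K}

theorem mul_sub_cyclicTrace_eq_zero (hσ : ∀ x, σ (σ (σ x)) = x) {β u : K}
    (h : β * u ^ 2 + cyclicTrace σ β * u + σ β = 0) :
    (σ β * σ u + β * u + β + σ (σ β)) *
      (σ β * σ u + β * u + β + σ (σ β) - cyclicTrace σ β) = 0 := by
  have hσh := congrArg σ h
  simp only [map_add, map_mul, map_pow, map_zero, apply_cyclicTrace hσ] at hσh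
  simp only [cyclicTrace] at h hσh ⊢
  linear_combination σ β * hσh + β * h +
    (-σ β * σ (σ β) - σ β ^ 2 * σ u - β * σ β - β * σ β * u + β * σ β * u * σ u) *
      CharTwo.two_eq_zero (R := K)

theorem quadratic_cyclicTrace_eq_zero_iff (hσ : ∀ x, σ (σ (σ x)) = x) {β : K} (hβ : β ≠ 0)
    (hT : cyclicTrace σ β ≠ 0) (u : K) :
    β * u ^ 2 + cyclicTrace σ β * u + σ β = 0 ↔
      σ u * u + u + 1 = 0 ∧ σ (β * u + σ β + β) = β * u + σ β + β := by
  have two : (2 : K) = 0 := CharTwo.two_eq_zero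
  simp only [map_add, map_mul]
  constructor
  · intro h
    have hz : σ β * σ u + β * u + β + σ (σ β) = 0 := by
      refine (mul_eq_zero.mp (mul_sub_cyclicTrace_eq_zero hσ h)).resolve_right fun hzT ↦ hT ?_
      rw [← cyclicTrace_map hσ, ← cyclicTrace_apply_add_self hσ (β * u), map_mul]
      simp only [cyclicTrace] at hzT
      congr 1
      linear_combination -hzT
    simp only [cyclicTrace] at h
    refine ⟨?_, by linear_combination hz + (-β - β * u) * two⟩
    refine ((mul_eq_zero.mp ?_).resolve_left ((map_ne_zero σ).mpr hβ))
    linear_combination u * hz + h + (-σ (σ β) * u - β * u - β * u ^ 2) * two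
  · rintro ⟨hu, hfix⟩
    simp only [cyclicTrace]
    linear_combination σ β * hu - u * hfix + σ (σ β) * u * two

end Quadratic

theorem stmt_2_general (s : ℕ) (q : ℕ) (hq : q = 2 ^ s)
    (K : Type*) [Field K] [Fintype K] (hK : Fintype.card K = q ^ 3)
    (β : K) (hβ : β ≠ 0) (htr : β + β ^ q + β ^ q ^ 2 ≠ 0) (u : K) :
    u ^ 2 + (β ^ (q ^ 2 - 1) + β ^ (q - 1) + 1) * u + β ^ (q - 1) = 0 ↔
      u ^ (q + 1) + u + 1 = 0 ∧ (β * u + β ^ q + β) ^ q = β * u + β ^ q + β := by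
  have : Fact (Nat.Prime 2) := ⟨Nat.prime_two⟩
  have : CharP K 2 := charP_of_card_eq_prime_pow (f := s * 3) (by rw [hK, hq, ← pow_mul])
  set σ := iterateFrobenius K 2 s
  have hσ : ∀ x, σ x = x ^ q := fun x ↦ by rw [iterateFrobenius_def, hq]
  have hσ3 : ∀ x, σ (σ (σ x)) = x := fun x ↦ by
    rw [hσ, hσ, hσ, ← pow_mul, ← pow_mul, ← pow_three, ← hK, FiniteField.pow_card]
  have hq0 : q ≠ 0 := hq ▸ (pow_pos two_pos s).ne'
  have htrσ : cyclicTrace σ β ≠ 0 := by rwa [cyclicTrace, hσ, hσ, ← pow_mul, ← sq]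
  rw [← mul_right_inj' hβ, mul_zero]
  convert quadratic_cyclicTrace_eq_zero_iff hσ3 hβ htrσ u using 2
  · rw [cyclicTrace, hσ, hσ, ← pow_mul, ← sq]
    linear_combination u * mul_pow_sub_one (pow_ne_zero 2 hq0) β + (1 + u) * mul_pow_sub_one hq0 β
  · rw [hσ, pow_succ]
  · rw [hσ, hσ]

theorem stmt_2 (s : ℕ) (hs : 0 < s) (q : ℕ) (hq : q = 2 ^ s)
    (K : Type*) [Field K] [Fintype K] (hK : Fintype.card K = q ^ 3)
    (β : K) (hβ : β ≠ 0) (htr : β + β ^ q + β ^ q ^ 2 ≠ 0) (u : K) :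
    u ^ 2 + (β ^ (q ^ 2 - 1) + β ^ (q - 1) + 1) * u + β ^ (q - 1) = 0 ↔
      u ^ (q + 1) + u + 1 = 0 ∧ (β * u + β ^ q + β) ^ q = β * u + β ^ q + β :=
  stmt_2_general s q hq K hK β hβ htr u
end

section
/- Let q = 2^s, β ∈ F_{q^3} nonzero, and u ∈ F_{q^3} a solution of βu^2 + Tr_{q^3/q}(β)u + β^q = 0. Then (u+1)^q is a solution of β^q v^2 + Tr_{q^3/q}(β)v + β = 0. -/
/-!
The field has characteristic 2, and `β ^ q ^ 3 = β`, so `x ↦ x ^ q` is a ring endomorphism fixing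
`T = β + β ^ q + β ^ q ^ 2`. Applying it to the equation for `u` gives
`β ^ q (u ^ q) ^ 2 + T u ^ q + β ^ q ^ 2 = 0`; replacing `u ^ q` by `u ^ q + 1` adds
`β ^ q + T = β + β ^ q ^ 2` to the left side, which turns the constant term into `β`.
-/

theorem FiniteField.ringChar_eq_two_of_card_eq_two_pow {F : Type*} [Field F] [Fintype F]
    {n : ℕ} (hn : n ≠ 0) (hcard : Fintype.card F = 2 ^ n) : ringChar F = 2 :=
  FiniteField.even_card_iff_char_two.mpr <| by
    rw [hcard, Nat.pow_mod, Nat.mod_self, zero_pow hn, Nat.zero_mod]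

section Frobenius

variable {R : Type*} [CommRing R] {p : ℕ} [ExpChar R p] {s : ℕ}

theorem pow_add_pow_add_pow_sq_pow_eq {β : R} (hβ : β ^ (p ^ s) ^ 3 = β) :
    (β + β ^ p ^ s + β ^ (p ^ s) ^ 2) ^ p ^ s = β + β ^ p ^ s + β ^ (p ^ s) ^ 2 := by
  rw [add_pow_expChar_pow, add_pow_expChar_pow, ← pow_mul, ← pow_mul, ← sq,
    show (p ^ s) ^ 2 * p ^ s = (p ^ s) ^ 3 by ring, hβ]
  ring

theorem quadratic_iterateFrobenius {a b c u : R} (h : a * u ^ 2 + b * u + c = 0) :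
    a ^ p ^ s * (u ^ p ^ s) ^ 2 + b ^ p ^ s * u ^ p ^ s + c ^ p ^ s = 0 := by
  simpa only [map_add, map_mul, map_pow, map_zero, iterateFrobenius_def] using
    congrArg (iterateFrobenius R p s) h

end Frobenius

theorem quadratic_conjugate_of_charTwo {R : Type*} [CommRing R] [CharP R 2] {s : ℕ} {β u : R}
    (hβ : β ^ (2 ^ s) ^ 3 = β)
    (h : β * u ^ 2 + (β + β ^ 2 ^ s + β ^ (2 ^ s) ^ 2) * u + β ^ 2 ^ s = 0) :
    β ^ 2 ^ s * ((u + 1) ^ 2 ^ s) ^ 2 + (β + β ^ 2 ^ s + β ^ (2 ^ s) ^ 2) * (u + 1) ^ 2 ^ s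
      + β = 0 := by
  have h' := quadratic_iterateFrobenius (p := 2) (s := s) h
  rw [pow_add_pow_add_pow_sq_pow_eq hβ, ← pow_mul β, ← sq] at h'
  rw [add_pow_char_pow, one_pow]
  linear_combination h' + (β ^ 2 ^ s * u ^ 2 ^ s + β + β ^ 2 ^ s) * CharTwo.two_eq_zero (R := R)

theorem stmt_4_general (s : ℕ) (hs : 0 < s) (q : ℕ) (hq : q = 2 ^ s)
    (K : Type*) [Field K] [Fintype K] (hK : Fintype.card K = q ^ 3)
    (β : K) (u : K)
    (h : β * u ^ 2 + (β + β ^ q + β ^ q ^ 2) * u + β ^ q = 0) :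
    β ^ q * ((u + 1) ^ q) ^ 2 + (β + β ^ q + β ^ q ^ 2) * (u + 1) ^ q + β = 0 := by
  subst hq
  have hchar : ringChar K = 2 := FiniteField.ringChar_eq_two_of_card_eq_two_pow
    (by positivity : s * 3 ≠ 0) (by rw [hK, pow_mul])
  have : CharP K 2 := hchar ▸ ringChar.charP K
  exact quadratic_conjugate_of_charTwo (by rw [← hK]; exact FiniteField.pow_card β) h

theorem stmt_4 (s : ℕ) (hs : 0 < s) (q : ℕ) (hq : q = 2 ^ s)
    (K : Type*) [Field K] [Fintype K] (hK : Fintype.card K = q ^ 3)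
    (β : K) (hβ : β ≠ 0) (u : K)
    (h : β * u ^ 2 + (β + β ^ q + β ^ q ^ 2) * u + β ^ q = 0) :
    β ^ q * ((u + 1) ^ q) ^ 2 + (β + β ^ q + β ^ q ^ 2) * (u + 1) ^ q + β = 0 :=
  stmt_4_general s hs q hq K hK β u h
end

section
/- Let q = 2^s with s ≡ 0 or 2 (mod 3). Then there is no u ∈ F_{q^3} such that u^{q+1} + u + 1 = 0 and u^3 + u + 1 = 0 simultaneously. -/
/-!
In characteristic 2 a root `u` of `X ^ 3 + X + 1` satisfies `u ^ 7 = 1`, and `2 ^ s ≡ 2 ^ (s % 3)`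
modulo 7. So for `s ≡ 0` or `2 (mod 3)` the equation `u ^ (2 ^ s + 1) + u + 1 = 0` becomes
`u ^ 2 + u + 1 = 0` or `u ^ 5 + u + 1 = 0`, and reducing either modulo `u ^ 3 + u + 1` leaves
`u = 0` or `u ^ 2 = 0`, impossible for a root of the cubic.
-/

theorem Nat.two_pow_mod_seven (s : ℕ) : 2 ^ s % 7 = 2 ^ (s % 3) := by
  conv_lhs => rw [← Nat.div_add_mod s 3, pow_add, pow_mul, Nat.mul_mod, Nat.pow_mod]
  have : s % 3 < 3 := Nat.mod_lt s three_pos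
  interval_cases s % 3 <;> norm_num

namespace CharTwo

variable {R : Type*} [CommRing R] [CharP R 2] {u : R}

theorem pow_seven_eq_one_of_cube_add_self_add_one (h : u ^ 3 + u + 1 = 0) : u ^ 7 = 1 := by
  linear_combination
    (u ^ 4 + u ^ 2 + u + 1) * h - (u ^ 5 + u ^ 4 + u ^ 3 + u ^ 2 + u + 1) * two_eq_zero (R := R)

theorem sq_add_self_add_one_ne_zero_of_cube_add_self_add_one (h : u ^ 3 + u + 1 = 0) :
    u ^ 2 + u + 1 ≠ 0 := by
  have := CharP.nontrivial_of_char_ne_one (R := R) (v := 2) (by norm_num)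
  intro h₂
  have hu : u = 0 := by linear_combination (1 - u) * h₂ + h - two_eq_zero (R := R)
  rw [hu] at h
  exact one_ne_zero (by linear_combination h)

theorem pow_five_add_self_add_one_ne_zero_of_cube_add_self_add_one (h : u ^ 3 + u + 1 = 0) :
    u ^ 5 + u + 1 ≠ 0 := by
  have := CharP.nontrivial_of_char_ne_one (R := R) (v := 2) (by norm_num)
  intro h₅
  have hsq : u ^ 2 = 0 := by
    linear_combination -h₅ + (u ^ 2 - 1) * h + (u + 1) * two_eq_zero (R := R)
  have hu : u = 1 := by linear_combination h - u * hsq - two_eq_zero (R := R)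
  rw [hu] at h
  exact one_ne_zero (by linear_combination h - two_eq_zero (R := R))

theorem pow_two_pow_add_one_add_self_add_one_ne_zero {s : ℕ} (hs : s % 3 = 0 ∨ s % 3 = 2)
    (h : u ^ 3 + u + 1 = 0) : u ^ (2 ^ s + 1) + u + 1 ≠ 0 := by
  rw [pow_succ, pow_eq_pow_mod _ (pow_seven_eq_one_of_cube_add_self_add_one h),
    Nat.two_pow_mod_seven, ← pow_succ]
  rcases hs with hs | hs <;> rw [hs]
  · exact sq_add_self_add_one_ne_zero_of_cube_add_self_add_one h
  · exact pow_five_add_self_add_one_ne_zero_of_cube_add_self_add_one h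

end CharTwo

theorem stmt_8_general (s : ℕ) (hmod : s % 3 = 0 ∨ s % 3 = 2)
    (q : ℕ) (hq : q = 2 ^ s)
    (K : Type*) [Field K] [Fintype K] (hK : Fintype.card K = q ^ 3) :
    ¬ ∃ u : K, u ^ (q + 1) + u + 1 = 0 ∧ u ^ 3 + u + 1 = 0 := by
  have : CharP K 2 := charP_of_card_eq_prime_pow (f := s * 3) (by rw [hK, hq, pow_mul])
  rintro ⟨u, hq₁, hcube⟩
  subst hq
  exact CharTwo.pow_two_pow_add_one_add_self_add_one_ne_zero hmod hcube hq₁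

theorem stmt_8 (s : ℕ) (hs : 0 < s) (hmod : s % 3 = 0 ∨ s % 3 = 2)
    (q : ℕ) (hq : q = 2 ^ s)
    (K : Type*) [Field K] [Fintype K] (hK : Fintype.card K = q ^ 3) :
    ¬ ∃ u : K, u ^ (q + 1) + u + 1 = 0 ∧ u ^ 3 + u + 1 = 0 :=
  stmt_8_general s hmod q hq K hK
end

section
/- Let q = 2^s with s ≡ 1 (mod 3), and suppose u satisfies u^3 + u + 1 = 0 in an algebraic closure of F_2. Then u ∈ F_{q^3} and u^{q+1} + u + 1 = 0. Moreover, u^2 and u+1 are linearly independent over F_q. -/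
namespace CubeAddAddOne

variable {R : Type*} [CommRing R] {u : R}

section IsDomain

variable [IsDomain R]

theorem ne_zero (hu : u ^ 3 + u + 1 = 0) : u ≠ 0 := by
  rintro rfl
  simp at hu

theorem add_one_ne_zero (hu : u ^ 3 + u + 1 = 0) : u + 1 ≠ 0 := by
  intro h
  exact one_ne_zero <| by linear_combination (u ^ 2 - u + 2) * h - hu

end IsDomain

variable [CharP R 2]

theorem pow_seven_eq_one (hu : u ^ 3 + u + 1 = 0) : u ^ 7 = 1 := by
  linear_combination (u ^ 4 + u ^ 2 + u + 1) * hu -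
    (u ^ 5 + u ^ 4 + u ^ 3 + u ^ 2 + u + 1) * (CharTwo.two_eq_zero : (2 : R) = 0)

theorem pow_two_pow (hu : u ^ 3 + u + 1 = 0) (s : ℕ) : u ^ 2 ^ s = u ^ 2 ^ (s % 3) := by
  rw [pow_eq_pow_mod _ (pow_seven_eq_one hu), Nat.two_pow_mod_seven]

/-- Linear independence of `u²` and `u + 1` over the fixed ring of any ring endomorphism `φ`
acting on `u` as the Frobenius. -/
theorem eq_zero_of_mul_sq_add_mul_add_one_eq_zero [IsDomain R] (hu : u ^ 3 + u + 1 = 0)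
    (φ : R →+* R) (hφ : φ u = u ^ 2) {x y : R} (hx : φ x = x) (hy : φ y = y)
    (h : x * u ^ 2 + y * (u + 1) = 0) : x = 0 ∧ y = 0 := by
  have hφh : x * u ^ 4 + y * (u ^ 2 + 1) = 0 := by
    have := congrArg φ h
    simp only [map_add, map_mul, map_pow, map_one, map_zero, hx, hy, hφ] at this
    linear_combination this
  have hxu : x * u ^ 3 = 0 := by
    linear_combination (u ^ 2 + 1) * h - (u + 1) * hφh + x * u ^ 2 * hu -
      x * u ^ 2 * (CharTwo.two_eq_zero : (2 : R) = 0)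
  have hx0 : x = 0 := (mul_eq_zero.1 hxu).resolve_right (pow_ne_zero _ (ne_zero hu))
  refine ⟨hx0, (mul_eq_zero.1 ?_).resolve_right (add_one_ne_zero hu)⟩
  simpa [hx0] using h

end CubeAddAddOne

open CubeAddAddOne in
theorem stmt_9_general (s : ℕ) (hmod : s % 3 = 1)
    (q : ℕ) (hq : q = 2 ^ s)
    (K : Type*) [Field K] [CharP K 2]
    (u : K) (h : u ^ 3 + u + 1 = 0) :
    u ^ q ^ 3 = u ∧ u ^ (q + 1) + u + 1 = 0 ∧
      ∀ x y : K, x ^ q = x → y ^ q = y → x * u ^ 2 + y * (u + 1) = 0 → x = 0 ∧ y = 0 := by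
  subst hq
  have huq : u ^ 2 ^ s = u ^ 2 := by rw [pow_two_pow h, hmod, pow_one]
  refine ⟨?_, ?_, fun x y hx hy hxy => ?_⟩
  · rw [← pow_mul, pow_two_pow h, Nat.mul_mod_left, pow_zero, pow_one]
  · rwa [pow_succ, huq, ← pow_succ]
  · exact eq_zero_of_mul_sq_add_mul_add_one_eq_zero h (iterateFrobenius K 2 s) huq hx hy hxy

theorem stmt_9 (s : ℕ) (hs : 0 < s) (hmod : s % 3 = 1)
    (q : ℕ) (hq : q = 2 ^ s)
    (K : Type*) [Field K] [IsAlgClosed K] [CharP K 2]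
    (u : K) (h : u ^ 3 + u + 1 = 0) :
    u ^ q ^ 3 = u ∧ u ^ (q + 1) + u + 1 = 0 ∧
      ∀ x y : K, x ^ q = x → y ^ q = y → x * u ^ 2 + y * (u + 1) = 0 → x = 0 ∧ y = 0 :=
  stmt_9_general s hmod q hq K u h
end

section
/- Let q = 2^s and u ∈ F_{q^3} with u^{q+1} + u + 1 = 0. Set β_1 = u^q and let β_2 ∈ F_{q^3} satisfy β_2^{q-1} = u^2. Then β_1 and β_2 are linearly independent over F_q if and only if (s ≡ 0 or 2 (mod 3)) or (s ≡ 1 (mod 3) and u^3 + u + 1 ≠ 0). -/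
/-!
Write `v = u ^ q`. In characteristic 2 the hypotheses read `u * v = u + 1` and
`β₂ ^ q = u ^ 2 * β₂`, so `β₁ = v` and `β₂` are dependent over `𝔽_q` iff `β₂ / v` is fixed by
`x ↦ x ^ q`, i.e. iff `v ^ q = u ^ 2 * v`. Applying Frobenius to `u * v = u + 1` and comparing
with its square shows that this happens iff `v = u ^ 2`, i.e. iff `u ^ 3 + u + 1 = 0`. In that
case `u` has order 7, and `u ^ (2 ^ s) = u ^ 2` forces `2 ^ s ≡ 2 (mod 7)`, i.e. `s ≡ 1 (mod 3)`.
-/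

theorem div_pow_eq_self_iff {K : Type*} [Field K] {β v c : K} {q : ℕ} (hβ : β ≠ 0) (hv : v ≠ 0)
    (hβq : β ^ q = c * β) : (β / v) ^ q = β / v ↔ v ^ q = c * v := by
  rw [div_pow, hβq, div_eq_div_iff (pow_ne_zero q hv) hv]
  constructor
  · intro h
    exact mul_left_cancel₀ hβ (by linear_combination -h)
  · intro h
    rw [h]
    ring

section CharTwo

variable {K : Type*} [Field K] [CharP K 2]

theorem forall_pow_fixed_mul_add_mul_eq_zero_iff {a : K} (ha : a ≠ 0) (b : K) (q : ℕ) :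
    (∀ x y : K, x ^ q = x → y ^ q = y → x * a + y * b = 0 → x = 0 ∧ y = 0) ↔
      (b / a) ^ q ≠ b / a := by
  constructor
  · intro hind hfix
    have hsum : b / a * a + 1 * b = 0 := by
      rw [div_mul_cancel₀ b ha, one_mul, CharTwo.add_self_eq_zero]
    exact one_ne_zero (hind _ 1 hfix (one_pow q) hsum).2
  · intro hnfix x y hx hy hxy
    have hxa : x * a = y * b := by linear_combination hxy - y * b * CharTwo.two_eq_zero (R := K)
    by_cases hy0 : y = 0
    · subst hy0
      exact ⟨(mul_eq_zero.mp (by simpa using hxa)).resolve_right ha, rfl⟩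
    · have hratio : b / a = x / y := by
        field_simp
        linear_combination -hxa
      exact absurd (by rw [hratio, div_pow, hx, hy]) hnfix

theorem cube_add_add_one_eq_zero_iff {u v : K} (hu : u ≠ 0) (huv : u * v = u + 1) :
    u ^ 3 + u + 1 = 0 ↔ v = u ^ 2 := by
  have hfactor : u ^ 3 + u + 1 = u * (u ^ 2 - v) := by
    linear_combination huv + (u + 1) * CharTwo.two_eq_zero (R := K)
  rw [hfactor, mul_eq_zero, sub_eq_zero, or_iff_right hu, eq_comm]

theorem pow_two_pow_eq_sq_mul_iff {u v : K} (s : ℕ) (hv : u ^ 2 ^ s = v) (huv : u * v = u + 1) :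
    v ^ 2 ^ s = u ^ 2 * v ↔ v = u ^ 2 := by
  constructor
  · intro hvq
    -- Raising `u * v = u + 1` to the power `2 ^ s`, and squaring it, give two values of `(u * v) ^ 2`.
    have hfrob : v * v ^ 2 ^ s = v + 1 :=
      calc v * v ^ 2 ^ s = (u * v) ^ 2 ^ s := by rw [mul_pow, hv]
        _ = v + 1 := by rw [huv, add_pow_char_pow, one_pow, hv]
    have hsq : (u * v) ^ 2 = u ^ 2 + 1 := by rw [huv, CharTwo.add_sq, one_pow]
    linear_combination hsq - hfrob + v * hvq
  · intro hvu
    calc v ^ 2 ^ s = (u ^ 2 ^ s) ^ 2 := by rw [hvu, ← pow_mul, ← pow_mul, mul_comm]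
      _ = u ^ 2 * v := by rw [hv, hvu]; ring

theorem orderOf_eq_seven {u : K} (hu : u ^ 3 + u + 1 = 0) : orderOf u = 7 := by
  have h2 : (2 : K) = 0 := CharTwo.two_eq_zero
  have : Fact (Nat.Prime 7) := ⟨by norm_num⟩
  refine orderOf_eq_prime ?_ ?_
  · linear_combination (u ^ 4 - u ^ 2 - u + 1) * hu + (u ^ 2 - 1) * h2
  · rintro rfl
    exact one_ne_zero (by linear_combination hu - h2 : (1 : K) = 0)

end CharTwo

theorem two_pow_mod_seven_eq_two_iff (s : ℕ) : 2 ^ s % 7 = 2 ↔ s % 3 = 1 := by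
  have h8 : 2 ^ s % 7 = 2 ^ (s % 3) % 7 := by
    conv_lhs => rw [← Nat.div_add_mod s 3, pow_add, pow_mul, Nat.mul_mod, Nat.pow_mod]
    norm_num
  have : s % 3 < 3 := Nat.mod_lt s (by norm_num)
  rw [h8]
  interval_cases s % 3 <;> simp

theorem mod_three_eq_one_of_pow_two_pow_eq_sq {M : Type*} [Monoid M] {u : M}
    (hu : orderOf u = 7) (s : ℕ) (h : u ^ 2 ^ s = u ^ 2) : s % 3 = 1 := by
  have hfin : IsOfFinOrder u := orderOf_pos_iff.mp (by omega)
  rw [hfin.pow_inj_mod, hu] at h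
  exact (two_pow_mod_seven_eq_two_iff s).mp h

theorem stmt_10_general (s : ℕ) (q : ℕ) (hq : q = 2 ^ s)
    (K : Type*) [Field K] [Fintype K] (hK : Fintype.card K = q ^ 3)
    (u : K) (h : u ^ (q + 1) + u + 1 = 0)
    (β₁ β₂ : K) (hβ₁ : β₁ = u ^ q) (hβ₂ : β₂ ^ (q - 1) = u ^ 2) :
    (∀ x y : K, x ^ q = x → y ^ q = y → x * β₁ + y * β₂ = 0 → x = 0 ∧ y = 0) ↔
      (s % 3 = 0 ∨ s % 3 = 2) ∨ (s % 3 = 1 ∧ u ^ 3 + u + 1 ≠ 0) := by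
  subst hq hβ₁
  rw [← pow_mul] at hK
  have : CharP K 2 := charP_of_card_eq_prime_pow hK
  have hs : s ≠ 0 := by
    rintro rfl
    exact Fintype.one_lt_card.ne' (by simpa using hK)
  have hu : u ≠ 0 := by
    rintro rfl
    simp at h
  have huv : u * u ^ 2 ^ s = u + 1 := by
    linear_combination h - (u + 1) * CharTwo.two_eq_zero (R := K)
  have hβ₂q : β₂ ^ 2 ^ s = u ^ 2 * β₂ := by
    rw [← hβ₂, ← pow_succ, Nat.sub_add_cancel Nat.one_le_two_pow]
  have hβ₂0 : β₂ ≠ 0 := by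
    rintro rfl
    rw [zero_pow (by have := Nat.one_lt_two_pow hs; omega)] at hβ₂
    exact hu (pow_eq_zero_iff two_ne_zero |>.mp hβ₂.symm)
  rw [forall_pow_fixed_mul_add_mul_eq_zero_iff (pow_ne_zero _ hu), ne_eq,
    div_pow_eq_self_iff hβ₂0 (pow_ne_zero _ hu) hβ₂q, pow_two_pow_eq_sq_mul_iff s rfl huv,
    ← cube_add_add_one_eq_zero_iff hu huv]
  constructor
  · intro hne
    by_cases hs1 : s % 3 = 1
    · exact Or.inr ⟨hs1, hne⟩
    · omega
  · rintro (hs02 | ⟨-, hne⟩) hcube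
    · have := mod_three_eq_one_of_pow_two_pow_eq_sq (orderOf_eq_seven hcube) s
        ((cube_add_add_one_eq_zero_iff hu huv).mp hcube)
      omega
    · exact hne hcube

theorem stmt_10 (s : ℕ) (hs : 0 < s) (q : ℕ) (hq : q = 2 ^ s)
    (K : Type*) [Field K] [Fintype K] (hK : Fintype.card K = q ^ 3)
    (u : K) (h : u ^ (q + 1) + u + 1 = 0)
    (β₁ β₂ : K) (hβ₁ : β₁ = u ^ q) (hβ₂ : β₂ ^ (q - 1) = u ^ 2) :
    (∀ x y : K, x ^ q = x → y ^ q = y → x * β₁ + y * β₂ = 0 → x = 0 ∧ y = 0) ↔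
      (s % 3 = 0 ∨ s % 3 = 2) ∨ (s % 3 = 1 ∧ u ^ 3 + u + 1 ≠ 0) :=
  stmt_10_general s q hq K hK u h β₁ β₂ hβ₁ hβ₂
end

section
/- Let q = 2^s and u ∈ F_{q^3}. If u^{q+1} + u + 1 ≠ 0, then the linearized polynomial L_u(β) = uβ^{q^2} + (u+1)β^q + (u^2+u)β is a permutation of F_{q^3}. -/
/-!
Write `φ x = x ^ q`, a ring automorphism of `K` with `φ³ = id`. Since `L_u` is additive and `K`
is finite, it suffices to show that its kernel is trivial. Applying `φ` and `φ²` to `L_u β = 0`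
gives a `3 × 3` linear system in `β, φ β, φ² β` (the Dickson matrix of `L_u`), whose determinant
in characteristic `2` is the norm `t · φ t · φ² t` of `t = u ^ (q + 1) + u + 1`. So `t ≠ 0`
forces `β = 0`.
-/

/-- Cramer's rule for the Dickson system: the coefficients are cofactors of its first column, and
in characteristic `2` its determinant factors as the product on the left. -/
theorem mul_mul_mul_mul_eq_zero_of_dickson_system {R : Type*} [CommRing R] [CharP R 2]
    {u v w b₀ b₁ b₂ : R}
    (h₀ : u * b₂ + (u + 1) * b₁ + (u ^ 2 + u) * b₀ = 0)
    (h₁ : v * b₀ + (v + 1) * b₂ + (v ^ 2 + v) * b₁ = 0)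
    (h₂ : w * b₁ + (w + 1) * b₀ + (w ^ 2 + w) * b₂ = 0) :
    (u * v + u + 1) * (v * w + v + 1) * (w * u + w + 1) * b₀ = 0 := by
  linear_combination (norm := grind)
    (w + v * w ^ 2 + v ^ 2 * w + v ^ 2 * w ^ 2) * h₀ + (w + w ^ 2 + u * w ^ 2) * h₁
      + (1 + v + u + u * v ^ 2) * h₂

section Dickson

variable {K : Type*} [Field K] (φ : K →+* K)

/-- `L_u`, with `φ` in the role of `x ↦ x ^ q`. -/
def twistedLinearized (u : K) : K →+ K :=
  AddMonoidHom.mk' (fun β => u * φ (φ β) + (u + 1) * φ β + (u ^ 2 + u) * β) fun a b => by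
    simp only [map_add]
    ring

variable {φ}

theorem twistedLinearized_injective [CharP K 2] (hφ : ∀ x, φ (φ (φ x)) = x) {u : K}
    (hu : u * φ u + u + 1 ≠ 0) : Function.Injective (twistedLinearized φ u) := by
  refine (injective_iff_map_eq_zero _).2 fun β hβ => ?_
  have h₀ : u * φ (φ β) + (u + 1) * φ β + (u ^ 2 + u) * β = 0 := hβ
  have h₁ := congrArg φ h₀
  have h₂ := congrArg (φ.comp φ) h₀
  simp only [RingHom.comp_apply, map_add, map_mul, map_one, map_pow, map_zero, hφ] at h₁ h₂
  have hnorm := mul_mul_mul_mul_eq_zero_of_dickson_system h₀ h₁ h₂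
  have hu₁ : φ u * φ (φ u) + φ u + 1 ≠ 0 := by simpa using (map_ne_zero φ).2 hu
  have hu₂ : φ (φ u) * u + φ (φ u) + 1 ≠ 0 := by simpa [hφ] using (map_ne_zero φ).2 hu₁
  exact (mul_eq_zero.1 hnorm).resolve_left (mul_ne_zero (mul_ne_zero hu hu₁) hu₂)

end Dickson

theorem stmt_11_general (s : ℕ) (q : ℕ) (hq : q = 2 ^ s)
    (K : Type*) [Field K] [Fintype K] (hK : Fintype.card K = q ^ 3)
    (u : K) (h : u ^ (q + 1) + u + 1 ≠ 0) :
    Function.Bijective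
      (fun β : K => u * β ^ q ^ 2 + (u + 1) * β ^ q + (u ^ 2 + u) * β) := by
  subst hq
  have : CharP K 2 := charP_of_card_eq_prime_pow (f := s * 3) (by rw [hK, pow_mul])
  let φ := iterateFrobenius K 2 s
  have hφ : ∀ x, φ x = x ^ 2 ^ s := iterateFrobenius_def 2 s
  have hφ_cube : ∀ x, φ (φ (φ x)) = x := fun x => by
    rw [hφ, hφ, hφ, ← pow_mul, ← pow_mul, ← pow_three, ← hK, FiniteField.pow_card]
  have hu : u * φ u + u + 1 ≠ 0 := by rwa [hφ, ← pow_succ']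
  have hL : ⇑(twistedLinearized φ u) =
      fun β : K => u * β ^ (2 ^ s) ^ 2 + (u + 1) * β ^ 2 ^ s + (u ^ 2 + u) * β := by
    ext β
    simp [twistedLinearized, hφ, ← pow_mul, sq]
  rw [← hL]
  exact Finite.injective_iff_bijective.1 (twistedLinearized_injective hφ_cube hu)

theorem stmt_11 (s : ℕ) (hs : 0 < s) (q : ℕ) (hq : q = 2 ^ s)
    (K : Type*) [Field K] [Fintype K] (hK : Fintype.card K = q ^ 3)
    (u : K) (h : u ^ (q + 1) + u + 1 ≠ 0) :
    Function.Bijective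
      (fun β : K => u * β ^ q ^ 2 + (u + 1) * β ^ q + (u ^ 2 + u) * β) :=
  stmt_11_general s q hq K hK u h
end

section
/- Let q = 2^s and u ∈ F_{q^3} with u^{q+1} + u + 1 = 0. Then the kernel of the F_q-linear map L_u(β) = uβ^{q^2} + (u+1)β^q + (u^2+u)β on F_{q^3} has F_q-dimension 2. -/
/-!
Write `q = 2 ^ s` and let `L` be the linearized polynomial
`u X^{q²} + (u + 1) X^q + (u² + u) X`. Using `u^{q+1} = u + 1` and additivity of `x ↦ x^q`
in characteristic 2 one finds `u² L^q + L = (u² + u)(X^{q³} - X)`, so `L` divides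
`X^{|K|} - X`. That polynomial splits over `K` with simple roots, hence so does `L`, and the
kernel of `L` has exactly `deg L = q²` elements.
-/

open Polynomial

theorem FiniteField.nat_card_eval_eq_zero_of_dvd_X_pow_card_sub_X {K : Type*} [Field K]
    [Fintype K] {P : K[X]} (hP : P ∣ X ^ Fintype.card K - X) :
    Nat.card {x : K // P.eval x = 0} = P.natDegree := by
  classical
  have hf₀ : (X ^ Fintype.card K - X : K[X]) ≠ 0 :=
    FiniteField.X_pow_card_sub_X_ne_zero K Fintype.one_lt_card
  have hroots := FiniteField.roots_X_pow_card_sub_X K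
  have hf_splits : (X ^ Fintype.card K - X : K[X]).Splits := by
    rw [splits_iff_card_roots, hroots,
      FiniteField.X_pow_card_sub_X_natDegree_eq K Fintype.one_lt_card]
    rfl
  have hf_sep : (X ^ Fintype.card K - X : K[X]).Separable :=
    (nodup_roots_iff_of_splits hf₀ hf_splits).mp (hroots ▸ Finset.univ.nodup)
  have hP₀ : P ≠ 0 := ne_zero_of_dvd_ne_zero hf₀ hP
  have hmem (x : K) : P.eval x = 0 ↔ x ∈ P.roots.toFinset := by
    rw [Multiset.mem_toFinset, mem_roots hP₀, IsRoot.def]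
  rw [Nat.card_congr (Equiv.subtypeEquivRight hmem), Nat.card_eq_fintype_card, Fintype.card_coe,
    Multiset.toFinset_card_of_nodup (nodup_roots (hf_sep.of_dvd hP)),
    ← (hf_splits.of_dvd hf₀ hP).natDegree_eq_card_roots]

section Linearized

variable {R : Type*} [CommRing R]

noncomputable def linearizedL (q : ℕ) (u : R) : R[X] :=
  C u * X ^ q ^ 2 + C (u + 1) * X ^ q + C (u ^ 2 + u) * X

theorem eval_linearizedL (q : ℕ) (u β : R) :
    (linearizedL q u).eval β = u * β ^ q ^ 2 + (u + 1) * β ^ q + (u ^ 2 + u) * β := by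
  simp [linearizedL]

theorem natDegree_linearizedL [Nontrivial R] {q : ℕ} (hq : 1 < q) {u : R} (hu : u ≠ 0) :
    (linearizedL q u).natDegree = q ^ 2 := by
  have hq₂ : q < q ^ 2 := lt_self_pow₀ hq one_lt_two
  unfold linearizedL
  compute_degree! <;> first | simpa [hq.ne', hq₂.ne'] using hu | omega

theorem C_sq_mul_linearizedL_pow_add [CharP R 2] (s : ℕ) {u : R} (hu : u ^ (2 ^ s + 1) = u + 1) :
    C (u ^ 2) * linearizedL (2 ^ s) u ^ 2 ^ s + linearizedL (2 ^ s) u =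
      C (u ^ 2 + u) * (X ^ (2 ^ s) ^ 3 - X) := by
  set q := 2 ^ s
  have frobenius_add (a b : R) : (a + b) ^ q = a ^ q + b ^ q := add_pow_char_pow a b 2 s
  have frobenius_add' (a b : R[X]) : (a + b) ^ q = a ^ q + b ^ q := add_pow_char_pow a b 2 s
  have hL_pow : linearizedL q u ^ q = C (u ^ q) * X ^ q ^ 3 + C (u ^ q + 1) * X ^ q ^ 2 +
      C ((u ^ q) ^ 2 + u ^ q) * X ^ q := by
    simp only [linearizedL, frobenius_add, frobenius_add', mul_pow, ← C_pow, one_pow,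
      pow_right_comm u 2 q, ← pow_mul]
    ring
  set v := u ^ q
  have huv : C u * C v = C u + 1 := by rw [← C_mul, ← pow_succ', hu, C_add, C_1]
  have htwo : (2 : R[X]) = 0 := CharTwo.two_eq_zero
  rw [hL_pow, linearizedL]
  simp only [C_add, C_pow, C_1]
  linear_combination
    (C u * X ^ q ^ 3 + C u * X ^ q ^ 2 + (C u * C v + 2 * C u + 1) * X ^ q) * huv +
      ((C u ^ 2 + C u) * X ^ q ^ 2 + (C u ^ 2 + 2 * C u + 1) * X ^ q
        + (C u ^ 2 + C u) * X) * htwo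

theorem linearizedL_dvd_X_pow_sub_X {K : Type*} [Field K] [CharP K 2] (s : ℕ) {u : K}
    (hu : u ^ (2 ^ s + 1) = u + 1) : linearizedL (2 ^ s) u ∣ X ^ (2 ^ s) ^ 3 - X := by
  have hu₀ : u ≠ 0 := by rintro rfl; simp at hu
  have hu₁ : u + 1 ≠ 0 := by rw [← hu]; exact pow_ne_zero _ hu₀
  have hunit : IsUnit (C (u ^ 2 + u)) :=
    isUnit_C.mpr (Ne.isUnit (by rw [sq, ← mul_add_one]; exact mul_ne_zero hu₀ hu₁))
  rw [← hunit.dvd_mul_left, ← C_sq_mul_linearizedL_pow_add s hu]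
  exact dvd_add (dvd_mul_of_dvd_right (dvd_pow_self _ (by positivity)) _) dvd_rfl

end Linearized

theorem stmt_12_general (s : ℕ) (q : ℕ) (hq : q = 2 ^ s)
    (K : Type*) [Field K] [Fintype K] (hK : Fintype.card K = q ^ 3)
    (u : K) (h : u ^ (q + 1) + u + 1 = 0) :
    Nat.card {β : K // u * β ^ q ^ 2 + (u + 1) * β ^ q + (u ^ 2 + u) * β = 0} = q ^ 2 := by
  subst hq
  have : CharP K 2 := charP_of_card_eq_prime_pow (f := s * 3) (by rw [hK, pow_mul])
  have hu : u ^ (2 ^ s + 1) = u + 1 := by rwa [add_assoc, CharTwo.add_eq_zero] at h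
  have hu₀ : u ≠ 0 := by rintro rfl; simp at hu
  have hq : 1 < 2 ^ s := by
    have := hK ▸ Fintype.one_lt_card (α := K)
    exact (one_lt_pow_iff_of_nonneg (Nat.zero_le _) three_ne_zero).mp this
  have hdvd : linearizedL (2 ^ s) u ∣ X ^ Fintype.card K - X :=
    hK ▸ linearizedL_dvd_X_pow_sub_X s hu
  simp only [← eval_linearizedL]
  rw [FiniteField.nat_card_eval_eq_zero_of_dvd_X_pow_card_sub_X hdvd,
    natDegree_linearizedL hq hu₀]

theorem stmt_12 (s : ℕ) (hs : 0 < s) (q : ℕ) (hq : q = 2 ^ s)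
    (K : Type*) [Field K] [Fintype K] (hK : Fintype.card K = q ^ 3)
    (u : K) (h : u ^ (q + 1) + u + 1 = 0) :
    Nat.card {β : K // u * β ^ q ^ 2 + (u + 1) * β ^ q + (u ^ 2 + u) * β = 0} = q ^ 2 :=
  stmt_12_general s q hq K hK u h
end

section
/- Let q = 2^s with s ≡ 1 (mod 3) and u ∈ F_{q^3} with u^3 + u + 1 = 0. Then the kernel of L_u(β) = uβ^{q^2} + (u+1)β^q + (u^2+u)β equals {x u^2 + y(u+1) : x, y ∈ F_q}. -/
/-! Write `φ β = β ^ q`. Since `s ≡ 1 (mod 3)` and `u` lies in `𝔽₈`, `φ u = u ^ 2`, and `φ` has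
order dividing `3` on `K`. Using `φ² β = Tr β + β + φ β` with `Tr β = β + φ β + φ² β ∈ 𝔽_q`, the
equation `L_u β = 0` becomes `φ β = u Tr β + u² β` (characteristic `2`), which says exactly that
`x = (β + (u + 1) Tr β) / u²` is fixed by `φ`; then `β = x u² + Tr β (u + 1)`. -/

theorem RingHom.map_add_map_add_map_fixed {R : Type*} [Semiring R] (φ : R →+* R)
    (hφ : ∀ β, φ (φ (φ β)) = β) (β : R) : φ (β + φ β + φ (φ β)) = β + φ β + φ (φ β) := by
  rw [map_add, map_add, hφ]; abel

section CharTwo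

variable {K : Type*} [Field K] [CharP K 2] {u : K}

theorem pow_eight_eq_self_of_cubic (h : u ^ 3 + u + 1 = 0) : u ^ 8 = u := by
  linear_combination (u ^ 5 - u ^ 3 - u ^ 2 + u + 2) * h
    + (-2 * u - 1) * CharTwo.two_eq_zero (R := K)

theorem pow_two_pow_eq_sq_of_cubic (h : u ^ 3 + u + 1 = 0) {s : ℕ} (hs : s % 3 = 1) :
    u ^ 2 ^ s = u ^ 2 := by
  obtain ⟨k, rfl⟩ : ∃ k, s = 3 * k + 1 := ⟨s / 3, by omega⟩
  have h8 : ∀ k : ℕ, u ^ 8 ^ k = u := fun k => by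
    induction k with
    | zero => simp
    | succ k ih => rw [pow_succ, pow_mul, ih, pow_eight_eq_self_of_cubic h]
  rw [pow_succ, pow_mul, pow_mul, show 2 ^ 3 = 8 by norm_num, h8]

theorem setOf_linearized_eq_zero_of_cubic (φ : K →+* K) (hφ : ∀ β, φ (φ (φ β)) = β)
    (hφu : φ u = u ^ 2) (h : u ^ 3 + u + 1 = 0) :
    {β : K | u * φ (φ β) + (u + 1) * φ β + (u ^ 2 + u) * β = 0} =
      {β : K | ∃ x y : K, φ x = x ∧ φ y = y ∧ β = x * u ^ 2 + y * (u + 1)} := by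
  have h2 : (2 : K) = 0 := CharTwo.two_eq_zero
  have hu0 : u ≠ 0 := by rintro rfl; norm_num at h
  have hφu2 : φ (u ^ 2) = u ^ 4 := by rw [map_pow, hφu, ← pow_mul]
  have hφu4 : φ (u ^ 4) = u ^ 8 := by rw [map_pow, hφu, ← pow_mul]
  ext β
  simp only [Set.mem_ofPred_eq]
  constructor
  · intro hker
    obtain ⟨t, ht⟩ : ∃ t, β + φ β + φ (φ β) = t := ⟨_, rfl⟩
    have htφ : φ t = t := ht ▸ φ.map_add_map_add_map_fixed hφ β
    have hφβ : φ β = u * t + u ^ 2 * β := by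
      linear_combination hker - u * ht + (-(u * t) - u ^ 2 * β) * h2
    refine ⟨(β + t * (u + 1)) / u ^ 2, t, ?_, htφ, ?_⟩
    · rw [map_div₀, map_add, map_mul, htφ, hφβ, map_add, hφu, map_one, hφu2]
      field_simp
      linear_combination t * h - u ^ 3 * t * h2
    · field_simp
      linear_combination (-(t * (u + 1))) * h2
  · rintro ⟨x, y, hx, hy, rfl⟩
    simp only [map_add, map_mul, hx, hy, hφu, hφu2, hφu4, map_one]
    linear_combination (x * (u ^ 6 - u ^ 4 - u ^ 3 + 2 * u ^ 2 + 4 * u) + y * (u ^ 2 + 1)) * h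
      + (x * (-3 * u ^ 2 - 2 * u) + y * (u ^ 2 + u)) * h2

end CharTwo

theorem stmt_13_general (s : ℕ) (hmod : s % 3 = 1)
    (q : ℕ) (hq : q = 2 ^ s)
    (K : Type*) [Field K] [Fintype K] (hK : Fintype.card K = q ^ 3)
    (u : K) (h : u ^ 3 + u + 1 = 0) :
    {β : K | u * β ^ q ^ 2 + (u + 1) * β ^ q + (u ^ 2 + u) * β = 0} =
      {β : K | ∃ x y : K, x ^ q = x ∧ y ^ q = y ∧ β = x * u ^ 2 + y * (u + 1)} := by
  have : CharP K 2 := charP_of_card_eq_prime_pow (f := s * 3) (by rw [hK, hq, pow_mul])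
  have hφ : ∀ β : K, iterateFrobenius K 2 s β = β ^ q := fun β => by rw [iterateFrobenius_def, hq]
  have hφ3 : ∀ β : K, β ^ q ^ 3 = β := fun β => hK ▸ FiniteField.pow_card β
  have key := setOf_linearized_eq_zero_of_cubic (iterateFrobenius K 2 s)
    (fun β => by simp only [hφ, ← pow_mul, ← pow_succ, ← sq, hφ3])
    (by rw [hφ, hq, pow_two_pow_eq_sq_of_cubic h hmod]) h
  simpa only [hφ, ← pow_mul, ← sq] using key

theorem stmt_13 (s : ℕ) (hs : 0 < s) (hmod : s % 3 = 1)
    (q : ℕ) (hq : q = 2 ^ s)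
    (K : Type*) [Field K] [Fintype K] (hK : Fintype.card K = q ^ 3)
    (u : K) (h : u ^ 3 + u + 1 = 0) :
    {β : K | u * β ^ q ^ 2 + (u + 1) * β ^ q + (u ^ 2 + u) * β = 0} =
      {β : K | ∃ x y : K, x ^ q = x ∧ y ^ q = y ∧ β = x * u ^ 2 + y * (u + 1)} :=
  stmt_13_general s hmod q hq K hK u h
end

section
/- Let q = 2^s and u ∈ F_{q^3}. The map L_u(β) = uβ^{q^2} + (u+1)β^q + (u^2+u)β is a permutation of F_{q^3} if and only if u^{q+1} + u + 1 ≠ 0. -/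
/-!
Write `σ x = x ^ q`; since `|K| = q³` and `q` is a power of the characteristic `2`, `σ` is a ring
automorphism with `σ³ = 1`, and `L_u` is additive, so it is bijective iff its kernel is trivial.
Applying `σ` and `σ²` to `L_u d = 0` gives a linear system in `d, σ d, σ² d` with determinant
`N · σ N · σ² N`, where `N = u^(q+1) + u + 1`, so `N ≠ 0` forces `d = 0`. Conversely, if
`N = 0` then `u · σ u · σ² u = 1`, so `u²` has norm `1` and by Hilbert 90 (here: `Kˣ` is
cyclic) it equals `β ^ (q - 1)` for some `β ≠ 0`; this `β` lies in the kernel.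
-/

theorem IsCyclic.exists_pow_eq_of_pow_eq_one {G : Type*} [Group G] [IsCyclic G] [Finite G]
    {m k : ℕ} (hG : Nat.card G = m * k) {x : G} (hx : x ^ k = 1) : ∃ y : G, y ^ m = x := by
  obtain ⟨g, hg⟩ := IsCyclic.exists_generator (α := G)
  obtain ⟨i, rfl⟩ := mem_powers_iff_mem_zpowers.mpr (hg x)
  have hk : 0 < k := Nat.pos_of_mul_pos_left (hG ▸ Nat.card_pos)
  have hdvd : m * k ∣ i * k := by
    rw [← hG, ← orderOf_eq_card_of_forall_mem_zpowers hg]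
    exact orderOf_dvd_of_pow_eq_one (by rwa [pow_mul])
  obtain ⟨j, rfl⟩ := Nat.dvd_of_mul_dvd_mul_right hk hdvd
  exact ⟨g ^ j, by rw [← pow_mul, mul_comm]⟩

theorem FiniteField.exists_pow_eq_mul_of_pow_eq_one {K : Type*} [Field K] [Fintype K] {q : ℕ}
    (hK : Fintype.card K = q ^ 3) {v : K} (hv : v ^ (q ^ 2 + q + 1) = 1) :
    ∃ β : K, β ≠ 0 ∧ β ^ q = v * β := by
  have hv0 : v ≠ 0 := by rintro rfl; simp at hv
  have hq : q ≠ 0 := by rintro rfl; simp [Fintype.card_ne_zero] at hK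
  have hcard : Nat.card Kˣ = (q - 1) * (q ^ 2 + q + 1) := by
    obtain ⟨n, rfl⟩ := Nat.exists_eq_succ_of_ne_zero hq
    rw [Nat.card_units, Nat.card_eq_fintype_card, hK, Nat.succ_sub_one]
    zify [Nat.one_le_pow 3 (n + 1) n.succ_pos]
    ring
  obtain ⟨β, hβ⟩ := IsCyclic.exists_pow_eq_of_pow_eq_one hcard
    (x := Units.mk0 v hv0) (Units.ext (by simpa using hv))
  refine ⟨β, β.ne_zero, ?_⟩
  rw [← Nat.sub_one_add_one hq, pow_succ, ← Units.val_pow_eq_pow_val, hβ, Units.val_mk0]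

section LinearizedMap

variable {K : Type*} [Field K]

-- `L_u` with the Frobenius `β ↦ β ^ q` abstracted to an arbitrary ring endomorphism `σ`.
def linearizedMap (σ : K →+* K) (u : K) : K →+ K :=
  AddMonoidHom.mk' (fun β ↦ u * σ (σ β) + (u + 1) * σ β + (u ^ 2 + u) * β)
    fun β γ ↦ by simp only [map_add]; ring

theorem linearizedMap_apply (σ : K →+* K) (u β : K) :
    linearizedMap σ u β = u * σ (σ β) + (u + 1) * σ β + (u ^ 2 + u) * β := rfl

variable [CharP K 2] {σ : K →+* K} {u : K}

theorem eq_zero_of_linearizedMap_eq_zero (hσ : ∀ x, σ (σ (σ x)) = x)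
    (hN : u * σ u + u + 1 ≠ 0) {d : K} (hd : linearizedMap σ u d = 0) : d = 0 := by
  rw [linearizedMap_apply] at hd
  have hd₁ := congrArg σ hd
  have hd₂ := congrArg σ hd₁
  simp only [map_add, map_mul, map_pow, map_one, map_zero, hσ] at hd₁ hd₂
  have hN₁ : σ (u * σ u + u + 1) ≠ 0 := (map_ne_zero σ).mpr hN
  have hN₂ : σ (σ (u * σ u + u + 1)) ≠ 0 := (map_ne_zero σ).mpr hN₁
  simp only [map_add, map_mul, map_one, hσ] at hN₁ hN₂
  have h2 : (2 : K) = 0 := CharTwo.two_eq_zero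
  set a₁ := σ u
  set a₂ := σ (σ u)
  -- The cofactor expansion of the system `hd, hd₁, hd₂` in the unknowns `d, σ d, σ² d`.
  have key : (u * a₁ + u + 1) * (a₁ * a₂ + a₁ + 1) * (a₂ * u + a₂ + 1) * d = 0 := by
    linear_combination (-a₂ + a₁ * a₂ ^ 2 + a₁ ^ 2 * a₂ + a₁ ^ 2 * a₂ ^ 2) * hd
      + (-a₂ - a₂ ^ 2 - u * a₂ ^ 2) * hd₁ + (1 + a₁ + u - u * a₁ ^ 2) * hd₂
      + ((a₁ * a₂ + a₁ * a₂ ^ 2 + u * a₂ + u * a₁ + 2 * u * a₁ * a₂ + u * a₁ * a₂ ^ 2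
        + u * a₁ ^ 2 * a₂ + u ^ 2 * a₂ + u ^ 2 * a₁ * a₂ + a₁ ^ 2 * u) * d) * h2
  exact (mul_eq_zero.mp key).resolve_left (mul_ne_zero (mul_ne_zero hN hN₁) hN₂)

theorem mul_mul_eq_one_of_mul_eq_add_one (hu : u * σ u = u + 1) :
    u * σ u * σ (σ u) = 1 := by
  have hu₁ := congrArg σ hu
  simp only [map_mul, map_add, map_one] at hu₁
  linear_combination u * hu₁ + hu + u * (CharTwo.two_eq_zero (R := K))

theorem linearizedMap_eq_zero_of_map_eq_mul (hu : u * σ u = u + 1) {β : K}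
    (hβ : σ β = u ^ 2 * β) : linearizedMap σ u β = 0 := by
  have hβ₂ : σ (σ β) = σ u ^ 2 * u ^ 2 * β := by rw [hβ, map_mul, map_pow, hβ, mul_assoc]
  rw [linearizedMap_apply, hβ₂, hβ]
  linear_combination (u ^ 2 * σ u - u ^ 2 - u) * β * hu
    + (u ^ 3 * σ u + u ^ 2 * σ u) * β * (CharTwo.two_eq_zero (R := K))

end LinearizedMap

theorem stmt_15_general (s : ℕ) (q : ℕ) (hq : q = 2 ^ s)
    (K : Type*) [Field K] [Fintype K] (hK : Fintype.card K = q ^ 3)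
    (u : K) :
    Function.Bijective
        (fun β : K => u * β ^ q ^ 2 + (u + 1) * β ^ q + (u ^ 2 + u) * β) ↔
      u ^ (q + 1) + u + 1 ≠ 0 := by
  have : CharP K 2 := charP_of_card_eq_prime_pow (f := s * 3) (by rw [hK, hq, ← pow_mul])
  set σ := iterateFrobenius K 2 s
  have hσ (x : K) : σ x = x ^ q := by rw [iterateFrobenius_def, hq]
  have hσ₃ (x : K) : σ (σ (σ x)) = x := by
    rw [hσ, hσ, hσ, ← pow_mul, ← pow_mul, ← mul_assoc, ← pow_three', ← hK,
      FiniteField.pow_card]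
  have hL : (fun β : K => u * β ^ q ^ 2 + (u + 1) * β ^ q + (u ^ 2 + u) * β) =
      linearizedMap σ u := by
    ext β; simp only [linearizedMap_apply, hσ, ← pow_mul, sq]
  have hN : u ^ (q + 1) = u * σ u := by rw [hσ, pow_succ']
  rw [hL, ← Finite.injective_iff_bijective, injective_iff_map_eq_zero, hN]
  constructor
  · intro hinj hN0
    have hu : u * σ u = u + 1 := by
      linear_combination hN0 - (CharTwo.two_eq_zero (R := K)) * (u + 1)
    have hnorm : (u ^ 2) ^ (q ^ 2 + q + 1) = 1 := by
      have hu₃ := mul_mul_eq_one_of_mul_eq_add_one hu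
      simp only [hσ, ← pow_mul] at hu₃
      rw [← pow_mul, mul_comm 2, pow_mul, sq q, pow_add, pow_add, pow_one,
        show u ^ (q * q) * u ^ q * u = u * u ^ q * u ^ (q * q) by ring, hu₃, one_pow]
    obtain ⟨β, hβ0, hβ⟩ := FiniteField.exists_pow_eq_mul_of_pow_eq_one hK hnorm
    exact hβ0 (hinj β (linearizedMap_eq_zero_of_map_eq_mul hu (by rw [hσ, hβ])))
  · exact fun hN _ ↦ eq_zero_of_linearizedMap_eq_zero hσ₃ hN

theorem stmt_15 (s : ℕ) (hs : 0 < s) (q : ℕ) (hq : q = 2 ^ s)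
    (K : Type*) [Field K] [Fintype K] (hK : Fintype.card K = q ^ 3)
    (u : K) :
    Function.Bijective
        (fun β : K => u * β ^ q ^ 2 + (u + 1) * β ^ q + (u ^ 2 + u) * β) ↔
      u ^ (q + 1) + u + 1 ≠ 0 :=
  stmt_15_general s q hq K hK u
end

section
/- Let q = 2^s and u ∈ F_{q^3} with u^{q+1} + u + 1 = 0. Then there exist exactly q^2 - 1 nonzero β ∈ F_{q^3} such that u^2 + (β^{q^2-1} + β^{q-1} + 1)u + β^{q-1} = 0. -/
/-!
Multiplying by `u` and using `u ^ (q + 1) = u + 1` (characteristic 2), the condition on `β` says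
exactly that `β` is a root of `P = X ^ (q² - 1) + u ^ q X ^ (q - 1) + u ^ (q + 1)`, whose constant
term is nonzero. For a root `x` of `P` in any extension, `y = x ^ (q - 1)` satisfies
`y ^ (q + 1) = u ^ q y + u ^ (q + 1)`; applying Frobenius once more gives
`y ^ (q² + q + 1) = u ^ (q² + q + 1) = 1`, i.e. `x ^ (q³) = x`. So `P` divides `X ^ (q³) - X`,
hence splits over `𝔽_{q³}` with distinct roots, and it has `deg P = q² - 1` of them.
-/

open Polynomial

theorem FiniteField.card_isRoot_of_dvd_X_pow_card_sub_X {K : Type*} [Field K] [Fintype K]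
    {P : K[X]} (hP : P ∣ X ^ Fintype.card K - X) :
    Nat.card {x : K // P.IsRoot x} = P.natDegree := by
  classical
  have hQ : (X ^ Fintype.card K - X : K[X]) ≠ 0 :=
    X_pow_card_sub_X_ne_zero K Fintype.one_lt_card
  have hQsplits : (X ^ Fintype.card K - X : K[X]).Splits := by
    rw [splits_iff_card_roots, roots_X_pow_card_sub_X,
      X_pow_card_sub_X_natDegree_eq K Fintype.one_lt_card]
    rfl
  have hnodup : P.roots.Nodup := by
    refine Multiset.nodup_of_le (roots.le_of_dvd hQ hP) ?_
    rw [roots_X_pow_card_sub_X]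
    exact Finset.univ.nodup
  have hP0 : P ≠ 0 := ne_zero_of_dvd_ne_zero hQ hP
  calc Nat.card {x : K // P.IsRoot x} = Nat.card P.roots.toFinset :=
        Nat.card_congr <| Equiv.subtypeEquivRight fun x => by
          rw [Multiset.mem_toFinset, mem_roots hP0]
    _ = P.roots.card := by rw [Nat.card_eq_finsetCard, Multiset.toFinset_card_of_nodup hnodup]
    _ = P.natDegree := splits_iff_card_roots.mp (hQsplits.of_dvd hQ hP)

theorem pow_sq_add_self_add_one_eq_one {A : Type*} [CommRing A] [CharP A 2] {q s : ℕ}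
    (hq : q = 2 ^ s) {w y : A}
    (hw : w ^ (q + 1) = w + 1) (hy : y ^ (q + 1) = w ^ q * y + w ^ (q + 1)) :
    y ^ (q ^ 2 + q + 1) = 1 := by
  have add_pow (a b : A) : (a + b) ^ q = a ^ q + b ^ q := hq ▸ add_pow_char_pow ..
  have norm_eq (z : A) : z ^ (q ^ 2 + q + 1) = (z ^ (q + 1)) ^ q * z := by ring
  have norm_w : w ^ (q ^ 2 + q + 1) = 1 := by
    rw [norm_eq, hw, add_pow, one_pow]
    linear_combination hw + w * CharTwo.two_eq_zero (R := A)
  rw [norm_eq, hy, add_pow]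
  linear_combination
    (w ^ q) ^ q * hy + norm_w + (w ^ (q + 1)) ^ q * y * CharTwo.two_eq_zero (R := A)

theorem Nat.sub_one_lt_sq_sub_one {q : ℕ} (hq : 2 ≤ q) : q - 1 < q ^ 2 - 1 :=
  Nat.sub_lt_sub_right (by omega) (lt_self_pow₀ hq one_lt_two)

section BetaPoly
variable {K : Type*} [Field K] {q : ℕ}

noncomputable def betaPoly (q : ℕ) (u : K) : K[X] :=
  trinomial 0 (q - 1) (q ^ 2 - 1) (u ^ (q + 1)) (u ^ q) 1

theorem natDegree_betaPoly (hq : 2 ≤ q) (u : K) : (betaPoly q u).natDegree = q ^ 2 - 1 :=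
  trinomial_natDegree (by omega) (Nat.sub_one_lt_sq_sub_one hq) one_ne_zero

theorem eval₂_betaPoly {A : Type*} [CommRing A] (f : K →+* A) (u : K) (x : A) :
    (betaPoly q u).eval₂ f x = f u ^ (q + 1) + f u ^ q * x ^ (q - 1) + x ^ (q ^ 2 - 1) := by
  simp [betaPoly, trinomial_def, eval₂_pow]

theorem eval_betaPoly (u β : K) :
    (betaPoly q u).eval β = u ^ (q + 1) + u ^ q * β ^ (q - 1) + β ^ (q ^ 2 - 1) :=
  eval₂_betaPoly (RingHom.id K) u β

theorem isRoot_betaPoly_iff (hq : 2 ≤ q) {u : K} (hu : u ^ (q + 1) = u + 1) (β : K) :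
    (betaPoly q u).IsRoot β ↔
      β ≠ 0 ∧ u ^ 2 + (β ^ (q ^ 2 - 1) + β ^ (q - 1) + 1) * u + β ^ (q - 1) = 0 := by
  have hu0 : u ≠ 0 := by
    rintro rfl
    simp at hu
  have eq_mul_eval : u ^ 2 + (β ^ (q ^ 2 - 1) + β ^ (q - 1) + 1) * u + β ^ (q - 1) =
      u * (betaPoly q u).eval β := by
    rw [eval_betaPoly]
    linear_combination (-β ^ (q - 1) - u) * hu
  rw [IsRoot.def, eq_mul_eval, mul_eq_zero, or_iff_right hu0, and_iff_right_of_imp]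
  rintro hβ rfl
  have := Nat.sub_one_lt_sq_sub_one hq
  rw [eval_betaPoly, zero_pow (by omega), zero_pow (by omega), mul_zero, add_zero, add_zero] at hβ
  exact pow_ne_zero _ hu0 hβ

theorem betaPoly_dvd_X_pow_pow_three_sub_X [CharP K 2] {s : ℕ} (hq : q = 2 ^ s) (hs : s ≠ 0)
    {u : K} (hu : u ^ (q + 1) = u + 1) : betaPoly q u ∣ X ^ q ^ 3 - X := by
  have hq2 : 2 ≤ q := hq ▸ Nat.le_self_pow hs 2
  have hdeg : (betaPoly q u).degree ≠ 0 := by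
    refine (natDegree_pos_iff_degree_pos.mp ?_).ne'
    rw [natDegree_betaPoly hq2]
    exact Nat.zero_lt_of_lt (Nat.sub_one_lt_sq_sub_one hq2)
  -- `P ∣ X ^ q ^ 3 - X` is checked at the root `x` of `P` in `AdjoinRoot P`.
  let A := AdjoinRoot (betaPoly q u)
  have : CharP A 2 :=
    charP_of_injective_ringHom (AdjoinRoot.of.injective_of_degree_ne_zero hdeg) 2
  set x := AdjoinRoot.root (betaPoly q u)
  set w := AdjoinRoot.of (betaPoly q u) u
  have hw : w ^ (q + 1) = w + 1 := by simpa [w] using congrArg (AdjoinRoot.of (betaPoly q u)) hu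
  have hx : w ^ (q + 1) + w ^ q * x ^ (q - 1) + x ^ (q ^ 2 - 1) = 0 := by
    rw [← eval₂_betaPoly]
    exact AdjoinRoot.eval₂_root _
  have hy : (x ^ (q - 1)) ^ (q + 1) = w ^ q * x ^ (q - 1) + w ^ (q + 1) := by
    rw [← pow_mul, mul_comm, ← Nat.sq_sub_sq, one_pow, add_comm]
    exact (CharTwo.add_eq_zero.mp hx).symm
  have hq3 : q ^ 3 = (q - 1) * (q ^ 2 + q + 1) + 1 := by
    obtain ⟨r, rfl⟩ : ∃ r, q = r + 1 := ⟨q - 1, by omega⟩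
    simp only [Nat.add_sub_cancel]
    ring
  rw [← AdjoinRoot.mk_eq_zero, map_sub, map_pow, AdjoinRoot.mk_X, sub_eq_zero, hq3, pow_succ,
    pow_mul, pow_sq_add_self_add_one_eq_one hq hw hy, one_mul]

end BetaPoly

theorem stmt_16_general (s : ℕ) (q : ℕ) (hq : q = 2 ^ s)
    (K : Type*) [Field K] [Fintype K] (hK : Fintype.card K = q ^ 3)
    (u : K) (h : u ^ (q + 1) + u + 1 = 0) :
    Nat.card {β : K // β ≠ 0 ∧
        u ^ 2 + (β ^ (q ^ 2 - 1) + β ^ (q - 1) + 1) * u + β ^ (q - 1) = 0} =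
      q ^ 2 - 1 := by
  have : CharP K 2 := charP_of_card_eq_prime_pow (f := s * 3) (by rw [hK, hq, pow_mul])
  have hs : s ≠ 0 := by
    rintro rfl
    have := hK ▸ Fintype.one_lt_card (α := K)
    simp [hq] at this
  have hq2 : 2 ≤ q := hq ▸ Nat.le_self_pow hs 2
  have hu : u ^ (q + 1) = u + 1 := CharTwo.add_eq_zero.mp (by rwa [← add_assoc])
  have hdvd : betaPoly q u ∣ X ^ Fintype.card K - X :=
    hK ▸ betaPoly_dvd_X_pow_pow_three_sub_X hq hs hu
  calc _ = Nat.card {β : K // (betaPoly q u).IsRoot β} :=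
        Nat.card_congr (Equiv.subtypeEquivRight fun β => (isRoot_betaPoly_iff hq2 hu β).symm)
    _ = q ^ 2 - 1 := by
      rw [FiniteField.card_isRoot_of_dvd_X_pow_card_sub_X hdvd, natDegree_betaPoly hq2]

theorem stmt_16 (s : ℕ) (hs : 0 < s) (q : ℕ) (hq : q = 2 ^ s)
    (K : Type*) [Field K] [Fintype K] (hK : Fintype.card K = q ^ 3)
    (u : K) (h : u ^ (q + 1) + u + 1 = 0) :
    Nat.card {β : K // β ≠ 0 ∧
        u ^ 2 + (β ^ (q ^ 2 - 1) + β ^ (q - 1) + 1) * u + β ^ (q - 1) = 0} =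
      q ^ 2 - 1 :=
  stmt_16_general s q hq K hK u h
end

section
/- Let q = 2^s, β ∈ F_{q^3} with Tr_{q^3/q}(β) ≠ 0, and suppose u ∈ F_{q^3} satisfies u^{q+1} + u + 1 = 0 and βu + β^q + β ∈ F_q. Then Tr_{q^3/2}(β^{q+1} / Tr_{q^3/q}(β)^2) = 0. -/
/-!
Since `Tr_{q³/q}(β) ≠ 0`, put `T = Tr_{q³/q}(β)` and `w = βu / T`. Applying the `q`-Frobenius to
`βu + β^q + β ∈ F_q` and using `u^{q+1} = u + 1` gives `β^q = βu² + Tu`, hence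
`β^{q+1} / T² = w² + w`. The absolute trace of an element of the form `w² + w` telescopes to
`w^{q³} + w = 0`.
-/

open Finset

theorem charP_two_of_card_eq_two_pow {K : Type*} [Field K] [Fintype K] {n : ℕ}
    (hK : Fintype.card K = 2 ^ n) : CharP K 2 := by
  have h : (2 : K) ^ n = 0 := by exact_mod_cast hK ▸ FiniteField.cast_card_eq_zero K
  exact (CharP.charP_iff_prime_eq_zero Nat.prime_two).mpr (eq_zero_of_pow_eq_zero h)

section CharTwo

variable {R : Type*} [CommRing R] [CharP R 2]

theorem sum_range_sq_add_self_pow_two_pow (w : R) (n : ℕ) :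
    ∑ i ∈ range n, (w ^ 2 + w) ^ 2 ^ i = w ^ 2 ^ n + w := by
  induction n with
  | zero => simp [CharTwo.add_self_eq_zero]
  | succ n ih =>
    rw [sum_range_succ, ih, add_pow_char_pow, ← pow_mul, ← pow_succ']
    linear_combination w ^ 2 ^ n * CharTwo.two_eq_zero (R := R)

theorem mul_sq_add_trace_mul_eq_pow {s q : ℕ} (hq : q = 2 ^ s) {β u : R}
    (h1 : u ^ (q + 1) + u + 1 = 0)
    (h2 : (β * u + β ^ q + β) ^ q = β * u + β ^ q + β) :
    β * u ^ 2 + (β + β ^ q + β ^ q ^ 2) * u = β ^ q := by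
  have hfrob : ∀ x y : R, (x + y) ^ q = x ^ q + y ^ q := fun x y => hq ▸ add_pow_char_pow x y 2 s
  rw [hfrob, hfrob, mul_pow, ← pow_mul, ← sq] at h2
  linear_combination β ^ q * h1 - u * h2 + (β ^ q ^ 2 * u - β ^ q) * CharTwo.two_eq_zero (R := R)

end CharTwo

theorem div_sq_eq_sq_add_self_of_pow_eq {K : Type*} [Field K] {q : ℕ} {β u T : K} (hT : T ≠ 0)
    (h : β * u ^ 2 + T * u = β ^ q) :
    β ^ (q + 1) / T ^ 2 = (β * u / T) ^ 2 + β * u / T := by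
  field_simp
  linear_combination -β * h

theorem sum_range_sq_add_self_pow_two_pow_eq_zero {K : Type*} [Field K] [Fintype K] {n : ℕ}
    (hK : Fintype.card K = 2 ^ n) (w : K) :
    ∑ i ∈ range n, (w ^ 2 + w) ^ 2 ^ i = 0 := by
  have := charP_two_of_card_eq_two_pow hK
  rw [sum_range_sq_add_self_pow_two_pow, ← hK, FiniteField.pow_card, CharTwo.add_self_eq_zero]

theorem stmt_17_general (s : ℕ) (q : ℕ) (hq : q = 2 ^ s)
    (K : Type*) [Field K] [Fintype K] (hK : Fintype.card K = q ^ 3)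
    (β : K) (htr : β + β ^ q + β ^ q ^ 2 ≠ 0) (u : K)
    (h1 : u ^ (q + 1) + u + 1 = 0)
    (h2 : (β * u + β ^ q + β) ^ q = β * u + β ^ q + β) :
    ∑ i ∈ Finset.range (3 * s), (β ^ (q + 1) / (β + β ^ q + β ^ q ^ 2) ^ 2) ^ 2 ^ i = 0 := by
  have hcard : Fintype.card K = 2 ^ (3 * s) := by rw [hK, hq, ← pow_mul, mul_comm]
  have := charP_two_of_card_eq_two_pow hcard
  rw [div_sq_eq_sq_add_self_of_pow_eq htr (mul_sq_add_trace_mul_eq_pow hq h1 h2)]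
  exact sum_range_sq_add_self_pow_two_pow_eq_zero hcard _

theorem stmt_17 (s : ℕ) (hs : 0 < s) (q : ℕ) (hq : q = 2 ^ s)
    (K : Type*) [Field K] [Fintype K] (hK : Fintype.card K = q ^ 3)
    (β : K) (htr : β + β ^ q + β ^ q ^ 2 ≠ 0) (u : K)
    (h1 : u ^ (q + 1) + u + 1 = 0)
    (h2 : (β * u + β ^ q + β) ^ q = β * u + β ^ q + β) :
    ∑ i ∈ Finset.range (3 * s), (β ^ (q + 1) / (β + β ^ q + β ^ q ^ 2) ^ 2) ^ 2 ^ i = 0 :=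
  stmt_17_general s q hq K hK β htr u h1 h2
end
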